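/- arXiv:math/0610748 — 6 statements merged into one kernel-verified Lean document; each statement's English description precedes it below -/
import Mathlib

section
/- Every element of SU(1,2) fixes a point of the closed unit ball of ℙ²(ℂ). Concretely: for every matrix A ∈ M₃(ℂ) with Aᴴ * J * A = J and det A = 1, there exist a nonzero vector v : Fin 3 → ℂ and a scalar λ ∈ ℂ such that A.mulVec v = λ • v and Re(B(v,v)) ≤ 0. -/
open Matrix Module End

/-!
Suppose every eigenvector `v` of `A` has `Re B(v,v) > 0`. For an isometry of a sesquilinear form,
an eigenvalue `μ` of an anisotropic eigenvector satisfies `μ̄ μ = 1`, eigenvectors for distinct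
eigenvalues are `B`-orthogonal, and the eigenvector at the bottom of a Jordan chain of length two
is isotropic. So `A` is diagonalisable with pairwise orthogonal eigenspaces, and `Re B(x,x) ≥ 0`
for every `x`, contradicting `B(e₀,e₀) = -1`.
-/

namespace LinearMap

variable {K V : Type*} [Field K] [StarRing K] [AddCommGroup V] [Module K V]

def IsIsometry (B : V →ₗ⋆[K] V →ₗ[K] K) (f : End K V) : Prop :=
  ∀ x y, B (f x) (f y) = B x y

namespace IsIsometry

variable {B : V →ₗ⋆[K] V →ₗ[K] K} {f : End K V}

theorem star_mul_self_eq_one (hf : IsIsometry B f) {v : V} {μ : K} (hv : f v = μ • v)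
    (hvv : B v v ≠ 0) : star μ * μ = 1 := by
  have h := hf v v
  rw [hv, LinearMap.map_smulₛₗ₂, map_smul, smul_smul, smul_eq_mul] at h
  exact mul_right_cancel₀ hvv (h.trans (one_mul _).symm)

theorem apply_eq_zero_of_eigenvalue_ne (hf : IsIsometry B f) {v w : V} {μ ν : K}
    (hv : f v = μ • v) (hw : f w = ν • w) (hvv : B v v ≠ 0) (hμν : μ ≠ ν) : B v w = 0 := by
  have hμ := hf.star_mul_self_eq_one hv hvv
  have h := hf v w
  rw [hv, hw, LinearMap.map_smulₛₗ₂, map_smul, smul_smul, smul_eq_mul, starRingEnd_apply] at h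
  have : star μ * (ν - μ) * B v w = 0 := by linear_combination h - B v w * hμ
  simpa [left_ne_zero_of_mul_eq_one hμ, sub_eq_zero, hμν.symm] using this

theorem apply_self_eq_zero_of_apply_eq_smul_add (hf : IsIsometry B f) {x y : V} {μ : K}
    (hy : f y = μ • y) (hx : f x = μ • x + y) : B y y = 0 := by
  by_contra hyy
  have hμ := hf.star_mul_self_eq_one hy hyy
  have h := hf y x
  rw [hy, hx, LinearMap.map_smulₛₗ₂, map_add, map_smul, smul_eq_mul, smul_eq_mul,
    starRingEnd_apply] at h
  have : star μ * B y y = 0 := by linear_combination h - B y x * hμ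
  simp [left_ne_zero_of_mul_eq_one hμ, hyy] at this

theorem maxGenEigenspace_eq_eigenspace (hf : IsIsometry B f) {μ : K}
    (hB : ∀ v ∈ f.eigenspace μ, B v v = 0 → v = 0) :
    f.maxGenEigenspace μ = f.eigenspace μ := by
  set g := f - μ • (1 : End K V)
  have hker : LinearMap.ker (g ^ 1) = LinearMap.ker (g ^ (1 + 1)) := by
    refine le_antisymm (LinearMap.ker_le_ker_comp _ _) fun x hx => ?_
    have hgx : g x ∈ f.eigenspace μ := by
      rw [LinearMap.mem_ker, pow_two, Module.End.mul_apply] at hx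
      rwa [eigenspace_def, LinearMap.mem_ker]
    have hfx : f x = μ • x + g x := by simp [g]
    simpa using hB _ hgx (hf.apply_self_eq_zero_of_apply_eq_smul_add (mem_eigenspace_iff.1 hgx) hfx)
  refine le_antisymm (fun x hx => ?_) eigenspace_le_maxGenEigenspace
  obtain ⟨k, hk⟩ := (mem_maxGenEigenspace f μ x).1 hx
  have : x ∈ LinearMap.ker (g ^ (1 + k)) := by
    rw [LinearMap.mem_ker, pow_add, Module.End.mul_apply, hk, map_zero]
  rw [← ker_pow_constant hker k, pow_one] at this
  rwa [eigenspace_def]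

theorem iSup_eigenspace_eq_top [IsAlgClosed K] [FiniteDimensional K V] (hf : IsIsometry B f)
    (hB : ∀ μ, ∀ v ∈ f.eigenspace μ, B v v = 0 → v = 0) :
    ⨆ μ, f.eigenspace μ = ⊤ := by
  simpa only [hf.maxGenEigenspace_eq_eigenspace (hB _)] using iSup_maxGenEigenspace_eq_top f

theorem apply_sum_self_of_mem_eigenspace (hf : IsIsometry B f)
    (hB : ∀ μ, ∀ v ∈ f.eigenspace μ, B v v = 0 → v = 0) (s : Finset K) {c : K → V}
    (hc : ∀ μ, c μ ∈ f.eigenspace μ) :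
    B (∑ μ ∈ s, c μ) (∑ ν ∈ s, c ν) = ∑ μ ∈ s, B (c μ) (c μ) := by
  have hortho : ∀ μ ν, μ ≠ ν → B (c μ) (c ν) = 0 := fun μ ν hμν => by
    by_cases hμ : B (c μ) (c μ) = 0
    · simp [hB μ _ (hc μ) hμ]
    · exact hf.apply_eq_zero_of_eigenvalue_ne (mem_eigenspace_iff.1 (hc μ))
        (mem_eigenspace_iff.1 (hc ν)) hμ hμν
  simp only [map_sum, LinearMap.sum_apply]
  exact Finset.sum_congr rfl fun μ hμ =>
    Finset.sum_eq_single_of_mem μ hμ fun ν _ hνμ => hortho ν μ hνμ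

theorem exists_eigenvector_re_apply_self_nonpos {V : Type*} [AddCommGroup V] [Module ℂ V]
    [FiniteDimensional ℂ V] {B : V →ₗ⋆[ℂ] V →ₗ[ℂ] ℂ} {f : End ℂ V} (hf : IsIsometry B f) {x : V}
    (hx : (B x x).re < 0) : ∃ (v : V) (μ : ℂ), v ≠ 0 ∧ f v = μ • v ∧ (B v v).re ≤ 0 := by
  by_contra! hpos
  have hB : ∀ μ, ∀ v ∈ f.eigenspace μ, B v v = 0 → v = 0 := fun μ v hv hvv => by
    by_contra hv0
    simpa [hvv] using hpos v μ hv0 (mem_eigenspace_iff.1 hv)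
  have hx_mem : x ∈ ⨆ μ, f.eigenspace μ := hf.iSup_eigenspace_eq_top hB ▸ Submodule.mem_top
  obtain ⟨c, hc, rfl⟩ := (Submodule.mem_iSup_iff_exists_finsupp _ _).1 hx_mem
  rw [Finsupp.sum, hf.apply_sum_self_of_mem_eigenspace hB _ hc, Complex.re_sum] at hx
  refine hx.not_ge (Finset.sum_nonneg fun μ _ => ?_)
  by_cases hcμ : c μ = 0
  · simp [hcμ]
  · exact (hpos _ μ hcμ (mem_eigenspace_iff.1 (hc μ))).le

end IsIsometry

end LinearMap

namespace Matrix

variable {R n : Type*} [CommRing R] [StarRing R] [Fintype n]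

theorem toLinearMapₛₗ₂'_starRingEnd_apply [DecidableEq n] (J : Matrix n n R) (v w : n → R) :
    toLinearMapₛₗ₂' R (starRingEnd R) (RingHom.id R) J v w = star v ⬝ᵥ J *ᵥ w := by
  simp only [toLinearMapₛₗ₂'_apply, dotProduct, mulVec, Finset.mul_sum, smul_eq_mul,
    RingHom.id_apply, starRingEnd_apply, Pi.star_apply]
  exact Finset.sum_congr rfl fun _ _ => Finset.sum_congr rfl fun _ _ => by ring

theorem star_mulVec_dotProduct_mulVec_mulVec {A J : Matrix n n R} (hA : Aᴴ * J * A = J)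
    (v w : n → R) : star (A *ᵥ v) ⬝ᵥ J *ᵥ (A *ᵥ w) = star v ⬝ᵥ J *ᵥ w := by
  simp only [star_mulVec, dotProduct_mulVec, vecMul_vecMul, hA]

theorem exists_eigenvector_re_star_dotProduct_mulVec_nonpos [DecidableEq n]
    {A J : Matrix n n ℂ} (hA : Aᴴ * J * A = J) {x : n → ℂ} (hx : (star x ⬝ᵥ J *ᵥ x).re < 0) :
    ∃ (v : n → ℂ) (l : ℂ), v ≠ 0 ∧ A *ᵥ v = l • v ∧ (star v ⬝ᵥ J *ᵥ v).re ≤ 0 := by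
  simpa only [toLinearMapₛₗ₂'_starRingEnd_apply, toLin'_apply] using
    LinearMap.IsIsometry.exists_eigenvector_re_apply_self_nonpos (f := toLin' A)
      (B := toLinearMapₛₗ₂' ℂ (starRingEnd ℂ) (RingHom.id ℂ) J)
      (by simpa only [LinearMap.IsIsometry, toLinearMapₛₗ₂'_starRingEnd_apply, toLin'_apply]
        using star_mulVec_dotProduct_mulVec_mulVec hA)
      (x := x) (by rwa [toLinearMapₛₗ₂'_starRingEnd_apply])

end Matrix

theorem su12_fixed_point_in_closed_ball_general
    (A : Matrix (Fin 3) (Fin 3) ℂ)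
    (hA : Aᴴ * Matrix.diagonal ![-1, 1, 1] * A = Matrix.diagonal ![-1, 1, 1]) :
    ∃ (v : Fin 3 → ℂ) (l : ℂ), v ≠ 0 ∧ A.mulVec v = l • v ∧
      (star v ⬝ᵥ (Matrix.diagonal ![-1, 1, 1]).mulVec v).re ≤ 0 :=
  exists_eigenvector_re_star_dotProduct_mulVec_nonpos hA (x := Pi.single 0 1)
    (by simp [Pi.star_single])

/-- Every element of SU(1,2) fixes a point of the closed unit ball of ℙ²(ℂ):
it has an eigenvector `v ≠ 0` with `Re(B(v,v)) ≤ 0`. -/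
theorem su12_fixed_point_in_closed_ball
    (A : Matrix (Fin 3) (Fin 3) ℂ)
    (hA : Aᴴ * Matrix.diagonal ![-1, 1, 1] * A = Matrix.diagonal ![-1, 1, 1])
    (hdet : A.det = 1) :
    ∃ (v : Fin 3 → ℂ) (l : ℂ), v ≠ 0 ∧ A.mulVec v = l • v ∧
      (star v ⬝ᵥ (Matrix.diagonal ![-1, 1, 1]).mulVec v).re ≤ 0 :=
  su12_fixed_point_in_closed_ball_general A hA
end

section
/- Elliptic–parabolic–hyperbolic trichotomy for SU(1,2): let A ∈ M₃(ℂ) satisfy Aᴴ * J * A = J and det A = 1, and suppose A has no nonzero eigenvector v with Re(B(v,v)) < 0 (i.e. A is not elliptic). Then (a) A has a nonzero eigenvector v with B(v,v) = 0, and (b) A does not have three pairwise linearly independent eigenvectors v₁, v₂, v₃ all satisfying B(vᵢ,vᵢ) = 0; that is, a non-elliptic element has at least one and at most two fixed points on the boundary sphere. -/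
open Matrix ComplexConjugate

/-!
Since `A` preserves `B`, eigenvectors with eigenvalues `l`, `m` satisfy
`B(v, w) = conj l * m * B(v, w)`, and the `B`-orthogonal complement of an eigenvector is
`A`-invariant.

(a) Take any eigenvector `v`. If it is not isotropic it is positive, as `A` is not elliptic, so the
plane `v^⊥` contains a further eigenvector `w`, again isotropic or positive. If both are positive,
`{v, w}^⊥` is an invariant line, and it is negative: it contains the projection of `e₀` off `v` and
`w`, which has `B ≤ B(e₀, e₀) = -1`. Its generator is then an elliptic fixed point.

(b) Two `B`-orthogonal isotropic vectors are proportional (subtract a multiple of one to kill the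
first coordinate; `B` is positive definite on `x₀ = 0`). So three pairwise independent isotropic
eigenvectors have `B(vᵢ, vⱼ) ≠ 0`, forcing `conj lᵢ * lⱼ = 1` and hence `l₁ = l₂`; then
`v₁ - conj B(v₁, v₂) • v₂` is an eigenvector with `B = -2 |B(v₁, v₂)|² < 0`.
-/

section Form

variable {n : Type*} [Fintype n]

def sesqForm (J : Matrix n n ℂ) : (n → ℂ) →ₗ⋆[ℂ] (n → ℂ) →ₗ[ℂ] ℂ :=
  LinearMap.mk₂'ₛₗ (starRingEnd ℂ) (RingHom.id ℂ) (fun v w => star v ⬝ᵥ J *ᵥ w)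
    (fun _ _ _ => by rw [star_add, add_dotProduct])
    (fun _ _ _ => by rw [star_smul, smul_dotProduct]; rfl)
    (fun _ _ _ => by rw [mulVec_add, dotProduct_add])
    (fun _ _ _ => by rw [mulVec_smul, dotProduct_smul]; rfl)

variable {J A : Matrix n n ℂ}

lemma sesqForm_apply (v w : n → ℂ) : sesqForm J v w = star v ⬝ᵥ J *ᵥ w := rfl

lemma conj_sesqForm (hJ : J.IsHermitian) (v w : n → ℂ) :
    conj (sesqForm J v w) = sesqForm J w v := by
  change star (star v ⬝ᵥ J *ᵥ w) = star w ⬝ᵥ J *ᵥ v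
  rw [star_dotProduct, star_star, star_mulVec, ← dotProduct_mulVec, hJ.eq]

lemma sesqForm_self_im (hJ : J.IsHermitian) (v : n → ℂ) : (sesqForm J v v).im = 0 :=
  Complex.conj_eq_iff_im.mp (conj_sesqForm hJ v v)

lemma sesqForm_self_eq_re (hJ : J.IsHermitian) (v : n → ℂ) :
    sesqForm J v v = ((sesqForm J v v).re : ℂ) :=
  (Complex.conj_eq_iff_re.mp (conj_sesqForm hJ v v)).symm

lemma sesqForm_mulVec_mulVec (hA : Aᴴ * J * A = J) (v w : n → ℂ) :
    sesqForm J (A *ᵥ v) (A *ᵥ w) = sesqForm J v w := by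
  rw [sesqForm_apply, sesqForm_apply, star_mulVec, mulVec_mulVec, dotProduct_mulVec,
    vecMul_vecMul, ← Matrix.mul_assoc, hA, ← dotProduct_mulVec]

lemma conj_mul_mul_sesqForm (hA : Aᴴ * J * A = J) {v w : n → ℂ} {l m : ℂ}
    (hv : A *ᵥ v = l • v) (hw : A *ᵥ w = m • w) :
    conj l * m * sesqForm J v w = sesqForm J v w := by
  conv_rhs => rw [← sesqForm_mulVec_mulVec hA v w, hv, hw]
  rw [LinearMap.map_smulₛₗ₂, map_smul, smul_eq_mul, smul_eq_mul, mul_assoc]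

lemma conj_mul_eq_one_of_sesqForm_ne_zero (hA : Aᴴ * J * A = J) {v w : n → ℂ} {l m : ℂ}
    (hv : A *ᵥ v = l • v) (hw : A *ᵥ w = m • w) (hvw : sesqForm J v w ≠ 0) : conj l * m = 1 :=
  mul_right_cancel₀ hvw ((conj_mul_mul_sesqForm hA hv hw).trans (one_mul _).symm)

lemma mulVec_mem_ker_sesqForm (hA : Aᴴ * J * A = J) {v x : n → ℂ} {l : ℂ}
    (hv : A *ᵥ v = l • v) (hl : l ≠ 0) (hx : x ∈ LinearMap.ker (sesqForm J v)) :
    A *ᵥ x ∈ LinearMap.ker (sesqForm J v) := by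
  rw [LinearMap.mem_ker] at hx ⊢
  have hv' : v = l⁻¹ • A *ᵥ v := by rw [hv, inv_smul_smul₀ hl]
  rw [hv', LinearMap.map_smulₛₗ₂, sesqForm_mulVec_mulVec hA, hx, smul_zero]

lemma exists_sesqForm_sub_smul_eq_zero_and_re_le (hJ : J.IsHermitian) {v : n → ℂ}
    (hv : 0 < (sesqForm J v v).re) (x : n → ℂ) :
    ∃ c : ℂ, sesqForm J v (x - c • v) = 0 ∧
      (sesqForm J (x - c • v) (x - c • v)).re ≤ (sesqForm J x x).re := by
  set p := (sesqForm J v v).re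
  have hp : sesqForm J v v = p := sesqForm_self_eq_re hJ v
  have hp0 : (p : ℂ) ≠ 0 := Complex.ofReal_ne_zero.mpr hv.ne'
  have hxv := conj_sesqForm hJ v x
  generalize hb : sesqForm J v x = b at hxv
  refine ⟨b / p, ?_, ?_⟩
  · rw [map_sub, map_smul, hp, hb, smul_eq_mul]
    field_simp
    ring
  · have hself : sesqForm J (x - (b / p) • v) (x - (b / p) • v) =
        sesqForm J x x - (Complex.normSq b / p : ℝ) := by
      simp only [map_sub, map_smul, LinearMap.sub_apply, LinearMap.map_smulₛₗ₂, smul_eq_mul, hp,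
        hb, ← hxv, map_div₀, Complex.conj_ofReal]
      push_cast
      rw [Complex.normSq_eq_conj_mul_self]
      field_simp
      ring
    rw [hself, Complex.sub_re, Complex.ofReal_re, sub_le_self_iff]
    exact div_nonneg (Complex.normSq_nonneg b) hv.le

lemma sesqForm_sub_smul_self_of_isotropic (hJ : J.IsHermitian) {v w : n → ℂ}
    (hv : sesqForm J v v = 0) (hw : sesqForm J w w = 0) :
    sesqForm J (v - conj (sesqForm J v w) • w) (v - conj (sesqForm J v w) • w) =
      -2 * Complex.normSq (sesqForm J v w) := by
  have hwv : sesqForm J w v = conj (sesqForm J v w) := (conj_sesqForm hJ v w).symm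
  simp only [map_sub, map_smul, LinearMap.sub_apply, LinearMap.map_smulₛₗ₂, smul_eq_mul, hv, hw,
    hwv, Complex.conj_conj, Complex.normSq_eq_conj_mul_self]
  ring

variable [DecidableEq n]

lemma isUnit_det_of_conjTranspose_mul_mul_eq (hJ : IsUnit J.det) (hA : Aᴴ * J * A = J) :
    IsUnit A.det := by
  have h := congrArg det hA
  rw [det_mul, det_mul] at h
  exact isUnit_of_mul_isUnit_right (h ▸ hJ)

lemma eigenvalue_ne_zero_of_isUnit_det (hA : IsUnit A.det) {v : n → ℂ} {l : ℂ}
    (hv : A *ᵥ v = l • v) (hv0 : v ≠ 0) : l ≠ 0 := by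
  rintro rfl
  rw [zero_smul, ← mulVec_zero A] at hv
  exact hv0 (mulVec_injective_iff_isUnit.mpr ((isUnit_iff_isUnit_det A).mpr hA) hv)

end Form

lemma Module.End.exists_eigenvector_mem {K V : Type*} [Field K] [IsAlgClosed K] [AddCommGroup V]
    [Module K V] [FiniteDimensional K V] (f : Module.End K V) {W : Submodule K V} (hW : W ≠ ⊥)
    (hfW : ∀ x ∈ W, f x ∈ W) : ∃ w ∈ W, w ≠ 0 ∧ ∃ m : K, f w = m • w := by
  have : Nontrivial W := Submodule.nontrivial_iff_ne_bot.mpr hW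
  obtain ⟨m, hm⟩ := Module.End.exists_eigenvalue (f.restrict hfW)
  obtain ⟨⟨w, hwW⟩, hw⟩ := hm.exists_hasEigenvector
  refine ⟨w, hwW, fun h => hw.2 (Subtype.ext h), m, ?_⟩
  exact congrArg Subtype.val hw.apply_eq_smul

lemma LinearMap.finrank_ker_inf_ker_add_two {K V : Type*} [Field K] [AddCommGroup V] [Module K V]
    [FiniteDimensional K V] {f g : V →ₗ[K] K} {v w : V} (hfv : f v ≠ 0) (hgv : g v = 0)
    (hfw : f w = 0) (hgw : g w ≠ 0) :
    Module.finrank K ↥(LinearMap.ker f ⊓ LinearMap.ker g) + 2 = Module.finrank K V := by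
  have hsurj : LinearMap.range (f.prod g) = ⊤ := by
    refine LinearMap.range_eq_top.mpr fun ⟨a, b⟩ => ⟨(a / f v) • v + (b / g w) • w, ?_⟩
    simp [hgv, hfw, hfv, hgw]
  rw [← LinearMap.ker_prod, ← LinearMap.finrank_range_add_finrank_ker (f.prod g), hsurj,
    finrank_top, Module.finrank_prod, Module.finrank_self, add_comm]

namespace SU12

def J : Matrix (Fin 3) (Fin 3) ℂ := diagonal ![-1, 1, 1]

lemma J_isHermitian : J.IsHermitian := by
  simp only [J, IsHermitian, diagonal_conjTranspose, diagonal_eq_diagonal_iff]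
  intro i
  fin_cases i <;> simp

lemma isUnit_det_J : IsUnit J.det := by
  simp [J, det_diagonal, Fin.prod_univ_three]

lemma sesqForm_J_apply (v w : Fin 3 → ℂ) :
    sesqForm J v w = -(conj (v 0) * w 0) + conj (v 1) * w 1 + conj (v 2) * w 2 := by
  simp [sesqForm_apply, J, dotProduct, mulVec_diagonal, Fin.sum_univ_three]

lemma sesqForm_J_single_zero : sesqForm J (Pi.single 0 1) (Pi.single 0 1) = -1 := by
  simp [sesqForm_J_apply]

lemma eq_zero_of_sesqForm_J_self_eq_zero {x : Fin 3 → ℂ} (hx0 : x 0 = 0)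
    (hx : sesqForm J x x = 0) : x = 0 := by
  have hsum : Complex.normSq (x 1) + Complex.normSq (x 2) = 0 := by
    rw [sesqForm_J_apply, hx0] at hx
    simp only [map_zero, zero_mul, neg_zero, zero_add, ← Complex.normSq_eq_conj_mul_self] at hx
    exact_mod_cast hx
  have h₁ := Complex.normSq_nonneg (x 1)
  have h₂ := Complex.normSq_nonneg (x 2)
  have hx1 : x 1 = 0 := Complex.normSq_eq_zero.mp (by linarith)
  have hx2 : x 2 = 0 := Complex.normSq_eq_zero.mp (by linarith)
  ext i
  fin_cases i <;> simp [hx0, hx1, hx2]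

lemma exists_eq_smul_of_isotropic_of_sesqForm_J_eq_zero {x y : Fin 3 → ℂ} (hx0 : x ≠ 0)
    (hxx : sesqForm J x x = 0) (hyy : sesqForm J y y = 0) (hxy : sesqForm J x y = 0) :
    ∃ c : ℂ, y = c • x := by
  have hx00 : x 0 ≠ 0 := fun h => hx0 (eq_zero_of_sesqForm_J_self_eq_zero h hxx)
  have hyx : sesqForm J y x = 0 := by rw [← conj_sesqForm J_isHermitian, hxy, map_zero]
  refine ⟨y 0 / x 0, sub_eq_zero.mp (eq_zero_of_sesqForm_J_self_eq_zero ?_ ?_)⟩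
  · simp [hx00]
  · simp [hxx, hyy, hxy, hyx]

lemma sesqForm_J_ne_zero_of_linearIndependent {x y : Fin 3 → ℂ} (hxx : sesqForm J x x = 0)
    (hyy : sesqForm J y y = 0) (hxy : LinearIndependent ℂ ![x, y]) : sesqForm J x y ≠ 0 := by
  intro h
  have hx0 : x ≠ 0 := by simpa using hxy.ne_zero 0
  obtain ⟨c, rfl⟩ := exists_eq_smul_of_isotropic_of_sesqForm_J_eq_zero hx0 hxx hyy h
  exact (LinearIndependent.pair_iff' hx0).mp hxy c rfl

lemma exists_sesqForm_J_neg_of_orthogonal_pos {v w : Fin 3 → ℂ}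
    (hv : 0 < (sesqForm J v v).re) (hw : 0 < (sesqForm J w w).re) (hvw : sesqForm J v w = 0) :
    ∃ z, sesqForm J v z = 0 ∧ sesqForm J w z = 0 ∧ (sesqForm J z z).re < 0 := by
  obtain ⟨c, hc, hle⟩ :=
    exists_sesqForm_sub_smul_eq_zero_and_re_le J_isHermitian hv (Pi.single 0 1)
  obtain ⟨d, hd, hle'⟩ :=
    exists_sesqForm_sub_smul_eq_zero_and_re_le J_isHermitian hw (Pi.single 0 1 - c • v)
  refine ⟨Pi.single 0 1 - c • v - d • w, ?_, hd, ?_⟩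
  · rw [map_sub, map_smul, hc, hvw, smul_zero, sub_zero]
  · rw [sesqForm_J_single_zero, Complex.neg_re, Complex.one_re] at hle
    linarith

def IsElliptic (A : Matrix (Fin 3) (Fin 3) ℂ) : Prop :=
  ∃ (v : Fin 3 → ℂ) (l : ℂ), v ≠ 0 ∧ A *ᵥ v = l • v ∧ (sesqForm J v v).re < 0

variable {A : Matrix (Fin 3) (Fin 3) ℂ}

lemma isElliptic_of_eigenvector {v : Fin 3 → ℂ} {l : ℂ} (hv : A *ᵥ v = l • v)
    (hneg : (sesqForm J v v).re < 0) : IsElliptic A :=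
  ⟨v, l, by rintro rfl; simp at hneg, hv, hneg⟩

lemma re_sesqForm_J_pos_of_not_isElliptic (hA : ¬ IsElliptic A) {v : Fin 3 → ℂ} {l : ℂ}
    (hv : A *ᵥ v = l • v) (hvv : sesqForm J v v ≠ 0) : 0 < (sesqForm J v v).re := by
  refine lt_of_le_of_ne (not_lt.mp fun h => hA (isElliptic_of_eigenvector hv h)) fun h => ?_
  exact hvv (Complex.ext h.symm (sesqForm_self_im J_isHermitian v))

lemma isElliptic_of_orthogonal_pos_eigenvectors (hA : Aᴴ * J * A = J) {v w : Fin 3 → ℂ}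
    {l m : ℂ}
    (hv : A *ᵥ v = l • v) (hw : A *ᵥ w = m • w) (hvp : 0 < (sesqForm J v v).re)
    (hwp : 0 < (sesqForm J w w).re) (hvw : sesqForm J v w = 0) : IsElliptic A := by
  have hdet := isUnit_det_of_conjTranspose_mul_mul_eq isUnit_det_J hA
  have hl := eigenvalue_ne_zero_of_isUnit_det hdet hv (by rintro rfl; simp at hvp)
  have hm := eigenvalue_ne_zero_of_isUnit_det hdet hw (by rintro rfl; simp at hwp)
  set K := LinearMap.ker (sesqForm J v) ⊓ LinearMap.ker (sesqForm J w)
  have hK : Module.finrank ℂ K = 1 := by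
    have hwv : sesqForm J w v = 0 := by rw [← conj_sesqForm J_isHermitian, hvw, map_zero]
    have := LinearMap.finrank_ker_inf_ker_add_two (fun h => by simp [h] at hvp) hwv hvw
      (fun h => by simp [h] at hwp)
    simp at this
    omega
  obtain ⟨z, hvz, hwz, hz⟩ := exists_sesqForm_J_neg_of_orthogonal_pos hvp hwp hvw
  have hzK : z ∈ K := ⟨hvz, hwz⟩
  have hAzK : A *ᵥ z ∈ K :=
    ⟨mulVec_mem_ker_sesqForm hA hv hl hzK.1, mulVec_mem_ker_sesqForm hA hw hm hzK.2⟩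
  have hz0 : (⟨z, hzK⟩ : K) ≠ 0 := by
    rintro h
    simp only [Submodule.mk_eq_zero] at h
    simp [h] at hz
  obtain ⟨c, hc⟩ := (finrank_eq_one_iff_of_nonzero' _ hz0).mp hK ⟨_, hAzK⟩
  exact isElliptic_of_eigenvector (congrArg Subtype.val hc).symm hz

lemma exists_isotropic_eigenvector (hA : Aᴴ * J * A = J) (hell : ¬ IsElliptic A) :
    ∃ (v : Fin 3 → ℂ) (l : ℂ), v ≠ 0 ∧ A *ᵥ v = l • v ∧ sesqForm J v v = 0 := by
  obtain ⟨v, -, hv0, l, hv⟩ :=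
    Module.End.exists_eigenvector_mem A.mulVecLin (W := ⊤) top_ne_bot fun _ _ => trivial
  rw [mulVecLin_apply] at hv
  by_cases hvv : sesqForm J v v = 0
  · exact ⟨v, l, hv0, hv, hvv⟩
  have hl := eigenvalue_ne_zero_of_isUnit_det
    (isUnit_det_of_conjTranspose_mul_mul_eq isUnit_det_J hA) hv hv0
  obtain ⟨w, hwv, hw0, m, hw⟩ := Module.End.exists_eigenvector_mem A.mulVecLin
    (LinearMap.ker_ne_bot_of_finrank_lt (by simp)) fun x hx => mulVec_mem_ker_sesqForm hA hv hl hx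
  rw [mulVecLin_apply] at hw
  by_cases hww : sesqForm J w w = 0
  · exact ⟨w, m, hw0, hw, hww⟩
  exact absurd (isElliptic_of_orthogonal_pos_eigenvectors hA hv hw
    (re_sesqForm_J_pos_of_not_isElliptic hell hv hvv)
    (re_sesqForm_J_pos_of_not_isElliptic hell hw hww) hwv) hell

lemma isElliptic_of_isotropic_eigenvectors (hA : Aᴴ * J * A = J) {v₁ v₂ v₃ : Fin 3 → ℂ}
    {l₁ l₂ l₃ : ℂ}
    (h₁ : A *ᵥ v₁ = l₁ • v₁) (h₂ : A *ᵥ v₂ = l₂ • v₂) (h₃ : A *ᵥ v₃ = l₃ • v₃)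
    (h₁₂ : sesqForm J v₁ v₂ ≠ 0) (h₁₃ : sesqForm J v₁ v₃ ≠ 0) (h₂₃ : sesqForm J v₂ v₃ ≠ 0)
    (hv₁ : sesqForm J v₁ v₁ = 0) (hv₂ : sesqForm J v₂ v₂ = 0) : IsElliptic A := by
  have h₁₃' := conj_mul_eq_one_of_sesqForm_ne_zero hA h₁ h₃ h₁₃
  have hl : l₁ = l₂ := (starRingEnd ℂ).injective <| mul_right_cancel₀
    (right_ne_zero_of_mul_eq_one h₁₃')
    (h₁₃'.trans (conj_mul_eq_one_of_sesqForm_ne_zero hA h₂ h₃ h₂₃).symm)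
  refine isElliptic_of_eigenvector (v := v₁ - conj (sesqForm J v₁ v₂) • v₂) (l := l₁) ?_ ?_
  · rw [mulVec_sub, mulVec_smul, h₁, h₂, ← hl, smul_comm, smul_sub]
  · rw [sesqForm_sub_smul_self_of_isotropic J_isHermitian hv₁ hv₂]
    simpa using Complex.normSq_pos.mpr h₁₂

end SU12

theorem su12_non_elliptic_boundary_fixed_points_general
    (A : Matrix (Fin 3) (Fin 3) ℂ)
    (hA : Aᴴ * Matrix.diagonal ![-1, 1, 1] * A = Matrix.diagonal ![-1, 1, 1])
    (hnotelliptic : ¬ ∃ (v : Fin 3 → ℂ) (l : ℂ), v ≠ 0 ∧ A.mulVec v = l • v ∧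
      (star v ⬝ᵥ (Matrix.diagonal ![-1, 1, 1]).mulVec v).re < 0) :
    (∃ (v : Fin 3 → ℂ) (l : ℂ), v ≠ 0 ∧ A.mulVec v = l • v ∧
      star v ⬝ᵥ (Matrix.diagonal ![-1, 1, 1]).mulVec v = 0) ∧
    ¬ ∃ (v₁ v₂ v₃ : Fin 3 → ℂ) (l₁ l₂ l₃ : ℂ),
      A.mulVec v₁ = l₁ • v₁ ∧ A.mulVec v₂ = l₂ • v₂ ∧ A.mulVec v₃ = l₃ • v₃ ∧
      LinearIndependent ℂ ![v₁, v₂] ∧ LinearIndependent ℂ ![v₂, v₃] ∧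
      LinearIndependent ℂ ![v₁, v₃] ∧
      star v₁ ⬝ᵥ (Matrix.diagonal ![-1, 1, 1]).mulVec v₁ = 0 ∧
      star v₂ ⬝ᵥ (Matrix.diagonal ![-1, 1, 1]).mulVec v₂ = 0 ∧
      star v₃ ⬝ᵥ (Matrix.diagonal ![-1, 1, 1]).mulVec v₃ = 0 := by
  have hJ : Aᴴ * SU12.J * A = SU12.J := hA
  refine ⟨SU12.exists_isotropic_eigenvector hJ hnotelliptic, ?_⟩
  rintro ⟨v₁, v₂, v₃, l₁, l₂, l₃, h₁, h₂, h₃, h₁₂, h₂₃, h₁₃, hv₁, hv₂, hv₃⟩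
  exact hnotelliptic <| SU12.isElliptic_of_isotropic_eigenvectors hJ h₁ h₂ h₃
    (SU12.sesqForm_J_ne_zero_of_linearIndependent hv₁ hv₂ h₁₂)
    (SU12.sesqForm_J_ne_zero_of_linearIndependent hv₁ hv₃ h₁₃)
    (SU12.sesqForm_J_ne_zero_of_linearIndependent hv₂ hv₃ h₂₃) hv₁ hv₂

/-- Elliptic–parabolic–hyperbolic trichotomy for SU(1,2): a non-elliptic element
has at least one eigenvector on the boundary sphere, and does not have three
pairwise linearly independent eigenvectors on the boundary sphere. -/
theorem su12_non_elliptic_boundary_fixed_points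
    (A : Matrix (Fin 3) (Fin 3) ℂ)
    (hA : Aᴴ * Matrix.diagonal ![-1, 1, 1] * A = Matrix.diagonal ![-1, 1, 1])
    (hdet : A.det = 1)
    (hnotelliptic : ¬ ∃ (v : Fin 3 → ℂ) (l : ℂ), v ≠ 0 ∧ A.mulVec v = l • v ∧
      (star v ⬝ᵥ (Matrix.diagonal ![-1, 1, 1]).mulVec v).re < 0) :
    (∃ (v : Fin 3 → ℂ) (l : ℂ), v ≠ 0 ∧ A.mulVec v = l • v ∧
      star v ⬝ᵥ (Matrix.diagonal ![-1, 1, 1]).mulVec v = 0) ∧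
    ¬ ∃ (v₁ v₂ v₃ : Fin 3 → ℂ) (l₁ l₂ l₃ : ℂ),
      A.mulVec v₁ = l₁ • v₁ ∧ A.mulVec v₂ = l₂ • v₂ ∧ A.mulVec v₃ = l₃ • v₃ ∧
      LinearIndependent ℂ ![v₁, v₂] ∧ LinearIndependent ℂ ![v₂, v₃] ∧
      LinearIndependent ℂ ![v₁, v₃] ∧
      star v₁ ⬝ᵥ (Matrix.diagonal ![-1, 1, 1]).mulVec v₁ = 0 ∧
      star v₂ ⬝ᵥ (Matrix.diagonal ![-1, 1, 1]).mulVec v₂ = 0 ∧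
      star v₃ ⬝ᵥ (Matrix.diagonal ![-1, 1, 1]).mulVec v₃ = 0 :=
  su12_non_elliptic_boundary_fixed_points_general A hA hnotelliptic
end

section
/- Spectrum of a parabolic normal form: for real numbers d₁, d₂ and a complex number c, let a := !![-I*(d₁+d₂), I*(d₁+d₂/2), c; -I*(d₁+d₂/2), I*d₁, c; conj c, -conj c, I*d₂]. Then a.mulVec ![1,1,0] = (-I*d₂/2) • ![1,1,0], and the characteristic polynomial of a equals (X - C(I*d₂)) * (X + C(I*d₂/2))²; in particular the eigenvalues of a are I*d₂ (simple) and -I*d₂/2 (with algebraic multiplicity 2), independently of d₁ and c. -/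
open Matrix Complex Polynomial

/-- Spectrum of the parabolic normal form in 𝔰𝔲(1,2): the vector `![1,1,0]` is an
eigenvector with eigenvalue `-I*d₂/2` and the characteristic polynomial is
`(X - C (I*d₂)) * (X + C (I*d₂/2))²`. -/
theorem parabolic_normal_form_spectrum (d₁ d₂ : ℝ) (c : ℂ) :
    (!![-I * (d₁ + d₂), I * (d₁ + d₂ / 2), c;
        -I * (d₁ + d₂ / 2), I * d₁, c;
        starRingEnd ℂ c, -starRingEnd ℂ c, I * d₂] : Matrix (Fin 3) (Fin 3) ℂ).mulVec
        ![1, 1, 0] = (-I * d₂ / 2) • ![1, 1, 0] ∧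
    (!![-I * (d₁ + d₂), I * (d₁ + d₂ / 2), c;
        -I * (d₁ + d₂ / 2), I * d₁, c;
        starRingEnd ℂ c, -starRingEnd ℂ c, I * d₂] : Matrix (Fin 3) (Fin 3) ℂ).charpoly =
      (X - C (I * d₂)) * (X + C (I * d₂ / 2)) ^ 2 := by
  constructor
  · funext i
    fin_cases i <;>
      simp [mulVec, dotProduct, Fin.sum_univ_three] <;> ring
  · rw [Matrix.charpoly, Matrix.det_fin_three]
    simp [charmatrix_apply, Matrix.one_apply, _root_.map_mul, map_div₀, map_ofNat]
    have hq : (C (I * (d₂:ℂ) / 2) : ℂ[X]) = C ((d₂:ℂ) / 2) * C I := by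
      rw [← _root_.map_mul]; congr 1; ring
    have hb : (2 : ℂ[X]) * C ((d₂:ℂ) / 2) = C (d₂:ℂ) := by
      rw [show (2:ℂ[X]) = C 2 from (map_ofNat C 2).symm, ← _root_.map_mul]; congr 1; ring
    rw [hq]
    set x : ℂ[X] := X
    set a : ℂ[X] := C (d₁:ℂ)
    set b : ℂ[X] := C (d₂:ℂ)
    set i : ℂ[X] := C I
    set p : ℂ[X] := C ((d₂:ℂ) / 2)
    set u : ℂ[X] := C c
    set v : ℂ[X] := C (starRingEnd ℂ c)
    linear_combination (x*a*i^2 - a*b*i^3 - i*u*v - x^2*i + x*b*i^2) * hb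
end

section
/- Nilpotency in the parabolic case d₂ = 0: for a real number d₁ and a complex number c, let a := !![-I*d₁, I*d₁, c; -I*d₁, I*d₁, c; conj c, -conj c, 0]. Then a³ = 0, and a² = 0 if and only if c = 0. -/
open Matrix Complex

/-- Nilpotency in the parabolic case `d₂ = 0`: the matrix is nilpotent of order at
most 3, and of order at most 2 exactly when `c = 0`. -/
theorem parabolic_nilpotency (d₁ : ℝ) (c : ℂ) :
    (!![-I * d₁, I * d₁, c;
        -I * d₁, I * d₁, c;
        starRingEnd ℂ c, -starRingEnd ℂ c, 0] : Matrix (Fin 3) (Fin 3) ℂ) ^ 3 = 0 ∧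
    ((!![-I * d₁, I * d₁, c;
         -I * d₁, I * d₁, c;
         starRingEnd ℂ c, -starRingEnd ℂ c, 0] : Matrix (Fin 3) (Fin 3) ℂ) ^ 2 = 0 ↔
      c = 0) := by
  constructor
  · ext i j
    fin_cases i <;> fin_cases j <;>
      simp [pow_succ, pow_zero, Matrix.mul_apply, Fin.sum_univ_succ]
  · constructor
    · intro h
      have := congrArg (fun M => M 0 0) h
      simp [pow_two, Matrix.mul_apply, Fin.sum_univ_succ] at this
      exact this
    · rintro rfl
      ext i j
      fin_cases i <;> fin_cases j <;>
        simp [pow_two, Matrix.mul_apply, Fin.sum_univ_succ]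
end

section
/- Through each point of the boundary sphere passes exactly one projective line tangent to the sphere, meeting the closed ball only at that point. Concretely: let v : Fin 3 → ℂ be nonzero with B(v,v) = 0. Then the subspace v^⊥ := {w : Fin 3 → ℂ | B(v,w) = 0} has complex dimension 2, contains v, and for every w ∈ v^⊥ one has Re(B(w,w)) ≥ 0, with B(w,w) = 0 if and only if w is a complex scalar multiple of v. -/
open Matrix

/-- The linear functional `w ↦ B(v, w)` for the Hermitian form `B` of signature
(1,2), where `B(v,w) = star v ⬝ᵥ (diagonal ![-1,1,1]).mulVec w`. -/
noncomputable def hermitianForm (v : Fin 3 → ℂ) : (Fin 3 → ℂ) →ₗ[ℂ] ℂ where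
  toFun w := star v ⬝ᵥ (Matrix.diagonal ![-1, 1, 1] : Matrix (Fin 3) (Fin 3) ℂ).mulVec w
  map_add' x y := by simp [Matrix.mulVec_add, dotProduct_add]
  map_smul' c x := by simp [Matrix.mulVec_smul, dotProduct_smul]

/-!
If `B(v,v) = 0` and `v ≠ 0` then `|v₀|² = |v₁|² + |v₂|² ≠ 0`, so `B(v, ·)` is a nonzero
functional and its kernel is a plane. For `w` in that plane, `conj v₀ w₀ = conj v₁ w₁ + conj v₂ w₂`,
and Lagrange's identity in `ℂ²` turns `|v₀|² B(w,w)` into `|v₁ w₂ - v₂ w₁|² ≥ 0`. Equality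
forces `(w₁, w₂)` to be proportional to `(v₁, v₂)`, and then the orthogonality relation makes
`w` proportional to `v`.
-/

open Complex ComplexConjugate

/-- Lagrange's identity for two vectors of `ℂ²`. -/
theorem Complex.normSq_add_mul_normSq_add (a b c d : ℂ) :
    (normSq a + normSq b) * (normSq c + normSq d) =
      normSq (conj a * c + conj b * d) + normSq (a * d - b * c) := by
  apply ofReal_injective
  push_cast
  simp only [normSq_eq_conj_mul_self, map_add, map_sub, map_mul, conj_conj]
  ring

namespace hermitianForm

theorem apply (v w : Fin 3 → ℂ) :
    hermitianForm v w = -(conj (v 0) * w 0) + conj (v 1) * w 1 + conj (v 2) * w 2 := by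
  simp [hermitianForm, dotProduct, mulVec, diagonal, Fin.sum_univ_three]

theorem apply_self (w : Fin 3 → ℂ) :
    hermitianForm w w = ((-normSq (w 0) + normSq (w 1) + normSq (w 2) : ℝ) : ℂ) := by
  rw [apply]
  push_cast
  simp only [normSq_eq_conj_mul_self]

theorem normSq_apply_zero_of_isotropic {v : Fin 3 → ℂ} (hiso : hermitianForm v v = 0) :
    normSq (v 0) = normSq (v 1) + normSq (v 2) := by
  rw [apply_self, ofReal_eq_zero] at hiso
  linarith

theorem apply_zero_ne_zero_of_isotropic {v : Fin 3 → ℂ} (hv : v ≠ 0)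
    (hiso : hermitianForm v v = 0) : v 0 ≠ 0 := by
  intro h0
  have hsum := normSq_apply_zero_of_isotropic hiso
  rw [h0, map_zero] at hsum
  have h1 : v 1 = 0 := normSq_eq_zero.mp (by linarith [normSq_nonneg (v 1), normSq_nonneg (v 2)])
  have h2 : v 2 = 0 := normSq_eq_zero.mp (by linarith [normSq_nonneg (v 1), normSq_nonneg (v 2)])
  exact hv (funext fun i => by fin_cases i <;> assumption)

theorem ne_zero_of_apply_zero_ne_zero {v : Fin 3 → ℂ} (hv0 : v 0 ≠ 0) : hermitianForm v ≠ 0 := by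
  intro h
  have h0 := LinearMap.congr_fun h (Pi.single 0 1)
  simp [apply, hv0] at h0

theorem finrank_ker_of_apply_zero_ne_zero {v : Fin 3 → ℂ} (hv0 : v 0 ≠ 0) :
    Module.finrank ℂ (LinearMap.ker (hermitianForm v)) = 2 := by
  have h := Module.Dual.finrank_ker_add_one_of_ne_zero (ne_zero_of_apply_zero_ne_zero hv0)
  rw [Module.finrank_fin_fun] at h
  omega

theorem conj_mul_apply_zero_of_mem_ker {v w : Fin 3 → ℂ} (hw : w ∈ LinearMap.ker (hermitianForm v)) :
    conj (v 0) * w 0 = conj (v 1) * w 1 + conj (v 2) * w 2 := by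
  rw [LinearMap.mem_ker, apply] at hw
  linear_combination -hw

theorem normSq_mul_apply_self_of_mem_ker {v w : Fin 3 → ℂ} (hiso : hermitianForm v v = 0)
    (hw : w ∈ LinearMap.ker (hermitianForm v)) :
    normSq (v 0) * (-normSq (w 0) + normSq (w 1) + normSq (w 2)) =
      normSq (v 1 * w 2 - v 2 * w 1) := by
  have hlag := normSq_add_mul_normSq_add (v 1) (v 2) (w 1) (w 2)
  have hw0 : normSq (v 0) * normSq (w 0) = normSq (conj (v 1) * w 1 + conj (v 2) * w 2) := by
    rw [← conj_mul_apply_zero_of_mem_ker hw, normSq_mul, normSq_conj]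
  rw [← normSq_apply_zero_of_isotropic hiso] at hlag
  linarith

theorem eq_smul_of_mem_ker {v w : Fin 3 → ℂ} (hiso : hermitianForm v v = 0) (hv0 : v 0 ≠ 0)
    (hw : w ∈ LinearMap.ker (hermitianForm v)) (hcross : v 1 * w 2 - v 2 * w 1 = 0) :
    w = (w 0 / v 0) • v := by
  have hvv := conj_mul_apply_zero_of_mem_ker (LinearMap.mem_ker.mpr hiso)
  have hvw := conj_mul_apply_zero_of_mem_ker hw
  have hcv0 : conj (v 0) ≠ 0 := (map_ne_zero _).mpr hv0
  -- After multiplication by `conj v₀`, both are combinations of `hvv`, `hvw` and `hcross`.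
  have h1 : v 0 * w 1 = v 1 * w 0 := mul_left_cancel₀ hcv0 <| by
    linear_combination w 1 * hvv - v 1 * hvw - conj (v 2) * hcross
  have h2 : v 0 * w 2 = v 2 * w 0 := mul_left_cancel₀ hcv0 <| by
    linear_combination w 2 * hvv - v 2 * hvw + conj (v 1) * hcross
  funext i
  fin_cases i
  · exact (div_mul_cancel₀ _ hv0).symm
  · show w 1 = w 0 / v 0 * v 1
    rw [div_mul_eq_mul_div, mul_comm, ← h1, mul_div_cancel_left₀ _ hv0]
  · show w 2 = w 0 / v 0 * v 2
    rw [div_mul_eq_mul_div, mul_comm, ← h2, mul_div_cancel_left₀ _ hv0]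

end hermitianForm

open hermitianForm in
/-- Through each point `[v]` of the boundary sphere passes exactly one tangent
projective line, the projectivization of `v^⊥`, which meets the closed ball only
at `[v]`. -/
theorem tangent_line_at_boundary_point (v : Fin 3 → ℂ) (hv : v ≠ 0)
    (hiso : star v ⬝ᵥ (Matrix.diagonal ![-1, 1, 1] : Matrix (Fin 3) (Fin 3) ℂ).mulVec v = 0) :
    Module.finrank ℂ (LinearMap.ker (hermitianForm v)) = 2 ∧
    v ∈ LinearMap.ker (hermitianForm v) ∧
    ∀ w ∈ LinearMap.ker (hermitianForm v),
      0 ≤ (star w ⬝ᵥ (Matrix.diagonal ![-1, 1, 1] : Matrix (Fin 3) (Fin 3) ℂ).mulVec w).re ∧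
      (star w ⬝ᵥ (Matrix.diagonal ![-1, 1, 1] : Matrix (Fin 3) (Fin 3) ℂ).mulVec w = 0 ↔
        ∃ c : ℂ, w = c • v) := by
  change hermitianForm v v = 0 at hiso
  have hv0 := apply_zero_ne_zero_of_isotropic hv hiso
  refine ⟨finrank_ker_of_apply_zero_ne_zero hv0, hiso, fun w hw => ?_⟩
  change 0 ≤ (hermitianForm w w).re ∧ (hermitianForm w w = 0 ↔ _)
  have hpos : 0 < normSq (v 0) := normSq_pos.mpr hv0
  have hid := normSq_mul_apply_self_of_mem_ker hiso hw
  rw [apply_self, ofReal_re, ofReal_eq_zero]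
  refine ⟨nonneg_of_mul_nonneg_right (hid ▸ normSq_nonneg _) hpos, ⟨fun h => ?_, ?_⟩⟩
  · rw [h, mul_zero, eq_comm, map_eq_zero] at hid
    exact ⟨_, eq_smul_of_mem_ker hiso hv0 hw hid⟩
  · rintro ⟨c, rfl⟩
    simp only [Pi.smul_apply, smul_eq_mul, normSq_mul]
    linear_combination -normSq c * normSq_apply_zero_of_isotropic hiso
end

section
/- Extension of local conjugacies (topological version of the prolongation lemma): let X and Y be topological spaces, ψ : X ≃ₜ X and φ : Y ≃ₜ Y homeomorphisms, U ⊆ X and V ⊆ Y open sets with ψ(U) ⊆ U and φ(V) ⊆ V, and let f : X → Y, g : Y → X be maps such that f is continuous on U, g is continuous on V, f maps U onto V, g(f(x)) = x for all x ∈ U, f(g(y)) = y for all y ∈ V, and f(ψ(x)) = φ(f(x)) for all x ∈ U. Set U' := ⋃_{n∈ℕ} ψ⁻ⁿ(U) and V' := ⋃_{n∈ℕ} φ⁻ⁿ(V). Then U' and V' are open sets satisfying ψ⁻¹(U') ⊇ U', and there exists a map f' : X → Y agreeing with f on U such that f' is continuous on U', f' maps U' bijectively onto V', f'(ψ(x))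 = φ(f'(x)) for all x ∈ U' with ψ(x) ∈ U', and the inverse bijection V' → U' is continuous on V'. -/
section Prolongation

variable {X Y : Type*} [TopologicalSpace X] [TopologicalSpace Y]

private lemma prolong_iterMem (ψ : X ≃ₜ X) {U : Set X} (hψU : ⇑ψ '' U ⊆ U) :
    ∀ k, ∀ u ∈ U, (⇑ψ)^[k] u ∈ U := by
  intro k
  induction k with
  | zero => intro u hu; simpa using hu
  | succ k ih =>
    intro u hu
    rw [Function.iterate_succ_apply']
    exact hψU ⟨_, ih u hu, rfl⟩

private lemma prolong_memIter (ψ : X ≃ₜ X) {U : Set X} (hψU : ⇑ψ '' U ⊆ U)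
    {n N : ℕ} (hnN : n ≤ N) {x : X} (hx : (⇑ψ)^[n] x ∈ U) : (⇑ψ)^[N] x ∈ U := by
  obtain ⟨k, rfl⟩ := Nat.exists_eq_add_of_le hnN
  rw [add_comm, Function.iterate_add_apply]
  exact prolong_iterMem ψ hψU k _ hx

private lemma prolong_iterConj (ψ : X ≃ₜ X) (φ : Y ≃ₜ Y) {U : Set X} {f : X → Y}
    (hψU : ⇑ψ '' U ⊆ U) (hconj : ∀ x ∈ U, f (ψ x) = φ (f x)) :
    ∀ k, ∀ u ∈ U, f ((⇑ψ)^[k] u) = (⇑φ)^[k] (f u) := by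
  intro k
  induction k with
  | zero => intro u _; simp
  | succ k ih =>
    intro u hu
    rw [Function.iterate_succ_apply', Function.iterate_succ_apply',
      hconj _ (prolong_iterMem ψ hψU k u hu), ih u hu]

open Classical in
noncomputable def prolongExt (ψ : X ≃ₜ X) (φ : Y ≃ₜ Y) (U : Set X) (f : X → Y)
    (x : X) : Y :=
  if h : ∃ n, (⇑ψ)^[n] x ∈ U then
    (⇑φ.symm)^[Nat.find h] (f ((⇑ψ)^[Nat.find h] x))
  else f x

private lemma prolong_left_inv (φ : Y ≃ₜ Y) (n : ℕ) (y : Y) :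
    (⇑φ.symm)^[n] ((⇑φ)^[n] y) = y :=
  (Function.LeftInverse.iterate φ.symm_apply_apply n) y

private lemma prolong_right_inv (φ : Y ≃ₜ Y) (n : ℕ) (y : Y) :
    (⇑φ)^[n] ((⇑φ.symm)^[n] y) = y :=
  (Function.LeftInverse.iterate φ.apply_symm_apply n) y

private lemma prolong_comm (φ : Y ≃ₜ Y) (n : ℕ) (y : Y) :
    (⇑φ.symm)^[n] (φ y) = φ ((⇑φ.symm)^[n] y) := by
  have comm : Function.Commute (⇑φ.symm) ⇑φ := fun z => by simp
  exact (comm.iterate_left n) y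

open Classical in
private lemma prolongExt_spec (ψ : X ≃ₜ X) (φ : Y ≃ₜ Y) {U : Set X} {f : X → Y}
    (hψU : ⇑ψ '' U ⊆ U) (hconj : ∀ x ∈ U, f (ψ x) = φ (f x))
    {n : ℕ} {x : X} (hx : (⇑ψ)^[n] x ∈ U) :
    prolongExt ψ φ U f x = (⇑φ.symm)^[n] (f ((⇑ψ)^[n] x)) := by
  have h : ∃ m, (⇑ψ)^[m] x ∈ U := ⟨n, hx⟩
  rw [prolongExt, dif_pos h]
  have hm : (⇑ψ)^[Nat.find h] x ∈ U := Nat.find_spec h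
  have hmn : Nat.find h ≤ n := Nat.find_le hx
  obtain ⟨k, hk⟩ := Nat.exists_eq_add_of_le hmn
  subst hk
  have h1 : (⇑ψ)^[Nat.find h + k] x = (⇑ψ)^[k] ((⇑ψ)^[Nat.find h] x) := by
    rw [add_comm, Function.iterate_add_apply]
  rw [h1, prolong_iterConj ψ φ hψU hconj k _ hm, Function.iterate_add_apply,
    prolong_left_inv]

private lemma prolongExt_continuousOn (ψ₀ : X ≃ₜ X) (φ₀ : Y ≃ₜ Y)
    (U₀ : Set X) (f₀ : X → Y) (hU₀ : IsOpen U₀) (hf₀ : ContinuousOn f₀ U₀)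
    (hinv₀ : ⇑ψ₀ '' U₀ ⊆ U₀) (hconj₀ : ∀ x ∈ U₀, f₀ (ψ₀ x) = φ₀ (f₀ x)) :
    ContinuousOn (prolongExt ψ₀ φ₀ U₀ f₀) (⋃ n : ℕ, (⇑ψ₀)^[n] ⁻¹' U₀) := by
  intro x hx
  obtain ⟨n, hn⟩ := Set.mem_iUnion.mp hx
  have hWopen : IsOpen ((⇑ψ₀)^[n] ⁻¹' U₀) := hU₀.preimage (ψ₀.continuous.iterate n)
  have hcomp : ContinuousOn ((⇑φ₀.symm)^[n] ∘ f₀ ∘ (⇑ψ₀)^[n]) ((⇑ψ₀)^[n] ⁻¹' U₀) := by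
    refine Continuous.comp_continuousOn (φ₀.symm.continuous.iterate n) ?_
    exact ContinuousOn.comp hf₀ ((ψ₀.continuous.iterate n).continuousOn)
      (fun z hz => hz)
  have heq : ContinuousOn (prolongExt ψ₀ φ₀ U₀ f₀) ((⇑ψ₀)^[n] ⁻¹' U₀) := by
    refine hcomp.congr ?_
    intro z hz
    exact prolongExt_spec ψ₀ φ₀ hinv₀ hconj₀ hz
  exact ((heq.continuousAt (hWopen.mem_nhds hn)).continuousWithinAt)

end Prolongation

/-- Extension of local conjugacies (topological prolongation lemma): a conjugacy
between `ψ` and `φ` defined on forward-invariant open sets `U`, `V` extends to the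
saturated open sets `U' = ⋃ₙ ψ⁻ⁿ(U)`, `V' = ⋃ₙ φ⁻ⁿ(V)`. -/
theorem prolongation_of_local_conjugacy
    (X Y : Type*) [TopologicalSpace X] [TopologicalSpace Y]
    (ψ : X ≃ₜ X) (φ : Y ≃ₜ Y)
    (U : Set X) (V : Set Y) (hU : IsOpen U) (hV : IsOpen V)
    (hψU : ⇑ψ '' U ⊆ U) (hφV : ⇑φ '' V ⊆ V)
    (f : X → Y) (g : Y → X)
    (hf : ContinuousOn f U) (hg : ContinuousOn g V)
    (himg : f '' U = V)
    (hgf : ∀ x ∈ U, g (f x) = x) (hfg : ∀ y ∈ V, f (g y) = y)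
    (hconj : ∀ x ∈ U, f (ψ x) = φ (f x)) :
    IsOpen (⋃ n : ℕ, (⇑ψ)^[n] ⁻¹' U) ∧
    IsOpen (⋃ n : ℕ, (⇑φ)^[n] ⁻¹' V) ∧
    (⋃ n : ℕ, (⇑ψ)^[n] ⁻¹' U) ⊆ ⇑ψ ⁻¹' (⋃ n : ℕ, (⇑ψ)^[n] ⁻¹' U) ∧
    ∃ f' : X → Y,
      (∀ x ∈ U, f' x = f x) ∧
      ContinuousOn f' (⋃ n : ℕ, (⇑ψ)^[n] ⁻¹' U) ∧
      Set.BijOn f' (⋃ n : ℕ, (⇑ψ)^[n] ⁻¹' U) (⋃ n : ℕ, (⇑φ)^[n] ⁻¹' V) ∧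
      (∀ x ∈ (⋃ n : ℕ, (⇑ψ)^[n] ⁻¹' U), ψ x ∈ (⋃ n : ℕ, (⇑ψ)^[n] ⁻¹' U) →
        f' (ψ x) = φ (f' x)) ∧
      ∃ g' : Y → X,
        ContinuousOn g' (⋃ n : ℕ, (⇑φ)^[n] ⁻¹' V) ∧
        (∀ x ∈ (⋃ n : ℕ, (⇑ψ)^[n] ⁻¹' U), g' (f' x) = x) ∧
        (∀ y ∈ (⋃ n : ℕ, (⇑φ)^[n] ⁻¹' V),
          g' y ∈ (⋃ n : ℕ, (⇑ψ)^[n] ⁻¹' U) ∧ f' (g' y) = y) := by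
  set U' := ⋃ n : ℕ, (⇑ψ)^[n] ⁻¹' U with hU'
  set V' := ⋃ n : ℕ, (⇑φ)^[n] ⁻¹' V with hV'
  -- facts about g
  have hgV : ∀ y ∈ V, g y ∈ U := by
    intro y hy
    rw [← himg] at hy
    obtain ⟨u, hu, rfl⟩ := hy
    rw [hgf u hu]; exact hu
  have hgVimg : g '' V ⊆ U := by rintro _ ⟨y, hy, rfl⟩; exact hgV y hy
  have hgconj : ∀ y ∈ V, g (φ y) = ψ (g y) := by
    intro y hy
    rw [← himg] at hy
    obtain ⟨u, hu, rfl⟩ := hy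
    rw [← hconj u hu, hgf _ (hψU ⟨u, hu, rfl⟩), hgf u hu]
  -- open
  have hopenU' : IsOpen U' := isOpen_iUnion fun n => hU.preimage (ψ.continuous.iterate n)
  have hopenV' : IsOpen V' := isOpen_iUnion fun n => hV.preimage (φ.continuous.iterate n)
  refine ⟨hopenU', hopenV', ?_, ?_⟩
  · rintro x hx
    obtain ⟨n, hn⟩ := Set.mem_iUnion.mp hx
    refine Set.mem_preimage.mpr (Set.mem_iUnion.mpr ⟨n, ?_⟩)
    have : (⇑ψ)^[n] (ψ x) = ψ ((⇑ψ)^[n] x) := by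
      rw [← Function.iterate_succ_apply, Function.iterate_succ_apply']
    simp only [Set.mem_preimage] at hn ⊢
    rw [this]
    exact hψU ⟨_, hn, rfl⟩
  set f' := prolongExt ψ φ U f with hf'def
  set g' := prolongExt φ ψ V g with hg'def
  have fspec : ∀ {n : ℕ} {x : X}, (⇑ψ)^[n] x ∈ U →
      f' x = (⇑φ.symm)^[n] (f ((⇑ψ)^[n] x)) := fun h => prolongExt_spec ψ φ hψU hconj h
  have gspec : ∀ {n : ℕ} {y : Y}, (⇑φ)^[n] y ∈ V →
      g' y = (⇑ψ.symm)^[n] (g ((⇑φ)^[n] y)) := fun h => prolongExt_spec φ ψ hφV hgconj h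
  -- f' x ∈ V' with explicit witness
  have fmem : ∀ {n : ℕ} {x : X}, (⇑ψ)^[n] x ∈ U → (⇑φ)^[n] (f' x) = f ((⇑ψ)^[n] x) := by
    intro n x hx
    rw [fspec hx, prolong_right_inv]
  have gmem : ∀ {n : ℕ} {y : Y}, (⇑φ)^[n] y ∈ V → (⇑ψ)^[n] (g' y) = g ((⇑φ)^[n] y) := by
    intro n y hy
    rw [gspec hy, prolong_right_inv]
  have hfV : ∀ x ∈ U, f x ∈ V := fun x hx => himg ▸ ⟨x, hx, rfl⟩
  have hgfx : ∀ x ∈ U', g' (f' x) = x := by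
    intro x hx
    obtain ⟨n, hn⟩ := Set.mem_iUnion.mp hx
    simp only [Set.mem_preimage] at hn
    have h1 : (⇑φ)^[n] (f' x) ∈ V := by rw [fmem hn]; exact hfV _ hn
    rw [gspec h1, fmem hn, hgf _ hn, prolong_left_inv]
  have hfgy : ∀ y ∈ V', g' y ∈ U' ∧ f' (g' y) = y := by
    intro y hy
    obtain ⟨n, hn⟩ := Set.mem_iUnion.mp hy
    simp only [Set.mem_preimage] at hn
    have h1 : (⇑ψ)^[n] (g' y) ∈ U := by rw [gmem hn]; exact hgV _ hn
    constructor
    · exact Set.mem_iUnion.mpr ⟨n, h1⟩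
    · rw [fspec h1, gmem hn, hfg _ hn, prolong_left_inv]
  refine ⟨f', ?_, ?_, ?_, ?_, g', ?_, hgfx, hfgy⟩
  · intro x hx
    have : (⇑ψ)^[0] x ∈ U := by simpa using hx
    simpa using fspec this
  · exact prolongExt_continuousOn ψ φ U f hU hf hψU hconj
  · refine ⟨?_, ?_, ?_⟩
    · -- MapsTo
      intro x hx
      obtain ⟨n, hn⟩ := Set.mem_iUnion.mp hx
      simp only [Set.mem_preimage] at hn
      refine Set.mem_iUnion.mpr ⟨n, ?_⟩
      simp only [Set.mem_preimage]
      rw [fmem hn]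
      exact hfV _ hn
    · -- InjOn
      intro x hx x' hx' hxy
      obtain ⟨n, hn⟩ := Set.mem_iUnion.mp hx
      obtain ⟨m, hm⟩ := Set.mem_iUnion.mp hx'
      simp only [Set.mem_preimage] at hn hm
      have hN : (⇑ψ)^[max n m] x ∈ U := prolong_memIter ψ hψU (le_max_left n m) hn
      have hN' : (⇑ψ)^[max n m] x' ∈ U := prolong_memIter ψ hψU (le_max_right n m) hm
      have h1 : f ((⇑ψ)^[max n m] x) = f ((⇑ψ)^[max n m] x') := by
        have := congrArg ((⇑φ)^[max n m]) hxy
        rwa [fmem hN, fmem hN'] at this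
      have h2 : (⇑ψ)^[max n m] x = (⇑ψ)^[max n m] x' := by
        have := congrArg g h1
        rwa [hgf _ hN, hgf _ hN'] at this
      exact Function.Injective.iterate ψ.injective (max n m) h2
    · -- SurjOn
      intro y hy
      exact ⟨g' y, (hfgy y hy).1, (hfgy y hy).2⟩
  · -- conjugacy on U'
    intro x hx _
    obtain ⟨n, hn⟩ := Set.mem_iUnion.mp hx
    simp only [Set.mem_preimage] at hn
    have hψn : (⇑ψ)^[n] (ψ x) ∈ U := by
      rw [← Function.iterate_succ_apply, Function.iterate_succ_apply']
      exact hψU ⟨_, hn, rfl⟩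
    rw [fspec hψn, fspec hn]
    rw [← Function.iterate_succ_apply, Function.iterate_succ_apply',
      hconj _ hn]
    exact prolong_comm φ n _
  · exact prolongExt_continuousOn φ ψ V g hV hg hφV hgconj
end
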